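/- arXiv:1605.01897 — 2 statements merged into one kernel-verified Lean document; each statement's English description precedes it below -/
import Mathlib

section
/- The action of the nonzero quaternions on the purely imaginary quaternions by a · c := conj(a) · c · a is transitive on the nonzero purely imaginary quaternions; consequently any two nonzero purely imaginary quaternions c, c' satisfy c' = conj(a) · c · a for some nonzero quaternion a. -/
/-!
For a purely imaginary `b`, `star b * c * b = -(b * c * b)` is `‖b‖²` times the half-turn of `c`
about the axis `b`. The half-turn about the bisector `b = ‖c'‖ • c + ‖c‖ • c'` carries the
direction of `c` to that of `c'`, so `star b * c * b` is a positive multiple of `c'`, and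
rescaling `b` by a real square root adjusts the length. The bisector vanishes exactly when `c'`
is a negative multiple of `c`; then any nonzero imaginary `w` orthogonal to `c` does the job,
since it anticommutes with `c` and hence `star w * c * w = normSq w • -c`.
-/

namespace Quaternion

section CommRing

variable {R : Type*} [CommRing R]

theorem mul_eq_neg_mul_of_orthogonal {c w : ℍ[R]} (hc : c.re = 0) (hw : w.re = 0)
    (h : c.imI * w.imI + c.imJ * w.imJ + c.imK * w.imK = 0) : c * w = -(w * c) := by
  ext <;> simp only [re_mul, imI_mul, imJ_mul, imK_mul, re_neg, imI_neg, imJ_neg, imK_neg, hc, hw]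
  · linear_combination -2 * h
  all_goals ring

theorem exists_re_eq_zero_mul_eq_neg_mul [Nontrivial R] {c : ℍ[R]} (hc : c.re = 0) :
    ∃ w : ℍ[R], w ≠ 0 ∧ w.re = 0 ∧ c * w = -(w * c) := by
  by_cases h : c.imI = 0 ∧ c.imJ = 0
  · refine ⟨⟨0, 1, 0, 0⟩, fun hw => by simpa using congrArg QuaternionAlgebra.imI hw, rfl,
      mul_eq_neg_mul_of_orthogonal hc rfl ?_⟩
    simp [h.1]
  · refine ⟨⟨0, -c.imJ, c.imI, 0⟩, fun hw => h ⟨?_, ?_⟩, rfl,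
      mul_eq_neg_mul_of_orthogonal hc rfl ?_⟩
    · simpa using congrArg QuaternionAlgebra.imJ hw
    · simpa using congrArg QuaternionAlgebra.imI hw
    · simp only
      ring

end CommRing

section LinearOrderedCommRing

variable {R : Type*} [CommRing R] [LinearOrder R] [IsStrictOrderedRing R] {c w : ℍ[R]}

theorem normSq_pos : 0 < normSq w ↔ w ≠ 0 :=
  normSq_nonneg.lt_iff_ne'.trans normSq_ne_zero

theorem mul_self_eq_neg_normSq_smul_one (hw : w.re = 0) : w * w = -(normSq w • 1) := by
  rw [← sq, sq_eq_neg_normSq.mpr hw, ← coe_mul_eq_smul, mul_one]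

theorem star_mul_mul_eq_normSq_smul_neg (hw : w.re = 0) (hcw : c * w = -(w * c)) :
    star w * c * w = normSq w • -c := by
  rw [star_eq_neg.mpr hw, neg_mul, neg_mul, mul_assoc, hcw, mul_neg, neg_neg, ← mul_assoc,
    mul_self_eq_neg_normSq_smul_one hw, neg_mul, smul_mul_assoc, one_mul, smul_neg]

end LinearOrderedCommRing

theorem exists_eq_star_mul_mul_of_smul_eq_smul {b c c' : ℍ} (hb : b ≠ 0) {s t : ℝ} (hs : 0 < s)
    (ht : 0 < t) (h : s • (star b * c * b) = t • c') : ∃ a : ℍ, a ≠ 0 ∧ c' = star a * c * a := by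
  have hst : Real.sqrt (s / t) ≠ 0 := by positivity
  refine ⟨Real.sqrt (s / t) • b, smul_ne_zero hst hb, ?_⟩
  rw [star_smul, smul_mul_assoc, smul_mul_assoc, mul_smul_comm, smul_smul, ← sq,
    Real.sq_sqrt (by positivity), div_eq_mul_inv, mul_comm, mul_smul, h, smul_smul,
    inv_mul_cancel₀ ht.ne', one_smul]

section Bisector

variable {c c' : ℍ}

theorem norm_smul_mul_bisector_eq (hc : c.re = 0) (hc' : c'.re = 0) :
    ‖c'‖ • (c * (‖c'‖ • c + ‖c‖ • c')) = ‖c‖ • ((‖c'‖ • c + ‖c‖ • c') * c') := by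
  rw [mul_add, add_mul, mul_smul_comm, mul_smul_comm, smul_mul_assoc, smul_mul_assoc,
    mul_self_eq_neg_normSq_smul_one hc, mul_self_eq_neg_normSq_smul_one hc',
    normSq_eq_norm_mul_self, normSq_eq_norm_mul_self]
  module

theorem norm_smul_star_bisector_mul_mul_eq (hc : c.re = 0) (hc' : c'.re = 0) :
    ‖c'‖ • (star (‖c'‖ • c + ‖c‖ • c') * c * (‖c'‖ • c + ‖c‖ • c')) =
      (‖c‖ * normSq (‖c'‖ • c + ‖c‖ • c')) • c' := by
  set b := ‖c'‖ • c + ‖c‖ • c' with hb_def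
  have hb : b.re = 0 := by simp [b, hc, hc']
  calc ‖c'‖ • (star b * c * b) = -(b * ‖c'‖ • (c * b)) := by
        rw [star_eq_neg.mpr hb, mul_smul_comm, neg_mul, neg_mul, mul_assoc, smul_neg]
    _ = (‖c‖ * normSq b) • c' := by
        rw [hb_def, norm_smul_mul_bisector_eq hc hc', ← hb_def, mul_smul_comm, ← mul_assoc,
          mul_self_eq_neg_normSq_smul_one hb, neg_mul, smul_mul_assoc, one_mul]
        module

end Bisector

end Quaternion

open Quaternion

/-- The action of the nonzero quaternions on the purely imaginary
quaternions by a · c := conj(a) · c · a is transitive on the nonzero purely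
imaginary quaternions: any two nonzero purely imaginary quaternions c, c'
satisfy c' = conj(a) · c · a for some nonzero quaternion a. -/
theorem stmt2 (c c' : Quaternion ℝ) (hc : c.re = 0) (hc' : c'.re = 0)
    (hc0 : c ≠ 0) (hc'0 : c' ≠ 0) :
    ∃ a : Quaternion ℝ, a ≠ 0 ∧ c' = star a * c * a := by
  have hc_pos : 0 < ‖c‖ := norm_pos_iff.mpr hc0
  have hc'_pos : 0 < ‖c'‖ := norm_pos_iff.mpr hc'0
  by_cases hb : ‖c'‖ • c + ‖c‖ • c' = 0
  · obtain ⟨w, hw0, hw, hcw⟩ := exists_re_eq_zero_mul_eq_neg_mul hc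
    refine exists_eq_star_mul_mul_of_smul_eq_smul hw0 hc'_pos
      (mul_pos (normSq_pos.mpr hw0) hc_pos) ?_
    rw [star_mul_mul_eq_normSq_smul_neg hw hcw]
    linear_combination (norm := module) (-normSq w) • hb
  · exact exists_eq_star_mul_mul_of_smul_eq_smul hb hc'_pos (mul_pos hc_pos (normSq_pos.mpr hb))
      (norm_smul_star_bisector_mul_mul_eq hc hc')
end

section
/- If a projective class Φ on a conformally symplectic manifold (M,ℓ) satisfies the compatibility condition ∇_{(a}ω_{b)c} = φ_{(a}ω_{b)c} for some connection ∇ ∈ Φ, one-form φ, and closed nonvanishing local section ω of ℓ, then the projectively modified connection ∇̂ corresponding to Υ = (1/3)φ satisfies ∇̂ω = 0; in particular Φ contains a torsion-free connection preserving ω. -/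
/-- If a projective class Φ on a conformally symplectic manifold
satisfies ∇_{(a}ω_{b)c} = φ_{(a}ω_{b)c} for some ∇ ∈ Φ, one-form φ, and closed
nowhere-vanishing section ω of ℓ, then the projectively modified connection ∇̂
corresponding to Υ = (1/3)φ satisfies ∇̂ω = 0; in particular Φ contains a
torsion-free connection preserving ω.

Model as in Statements 9/13; closedness of ω is expressed by the vanishing of
the complete alternation of ∇ω (which for a torsion-free connection computes
dω up to a nonzero constant), and the symmetrized condition is stated in its
(equivalent) doubled form. -/
theorem stmt14 (R : Type*) [CommRing R] [Algebra ℝ R]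
    (X : Type*) [AddCommGroup X] [Module R X]
    (L : X → R → R) (D : X → X → X)
    (ω : X → X → R)
    (hLadd : ∀ (ξ : X) (f g : R), L ξ (f + g) = L ξ f + L ξ g)
    (hskew : ∀ a b, ω a b = -ω b a)
    (haddl : ∀ a b c, ω (a + b) c = ω a c + ω b c)
    (haddr : ∀ a b c, ω a (b + c) = ω a b + ω a c)
    (hsmull : ∀ (f : R) a b, ω (f • a) b = f * ω a b)
    (hsmulr : ∀ (f : R) a b, ω a (f • b) = f * ω a b)
    (φ : X → R) :
    let covD : (X → X → X) → X → X → X → R :=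
      fun Dc a b c => L a (ω b c) - ω (Dc a b) c - ω b (Dc a c)
    -- the compatibility condition ∇_{(a}ω_{b)c} = φ_{(a}ω_{b)c}
    (∀ a b c, covD D a b c + covD D b a c = φ a * ω b c + φ b * ω a c) →
    -- closedness: dω = 0, i.e. the complete alternation of ∇ω vanishes
    (∀ a b c, (6 : ℝ)⁻¹ •
      (covD D a b c - covD D a c b - covD D b a c + covD D b c a +
        covD D c a b - covD D c b a) = 0) →
    -- then the connection modified by Υ = (1/3)φ preserves ω
    let Υ : X → R := fun ξ => (3 : ℝ)⁻¹ • φ ξ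
    let Dhat : X → X → X := fun ξ η => D ξ η + Υ ξ • η + Υ η • ξ
    ∀ a b c, covD Dhat a b c = 0 := by
  intro covD hsym halt Υ Dhat a b c
  -- basic facts about L
  have hL0 : ∀ ξ, L ξ (0:R) = 0 := by
    intro ξ
    have h := hLadd ξ 0 0
    rw [add_zero] at h
    exact (add_left_cancel (a := L ξ 0) (by rw [add_zero]; exact h)).symm
  have hLneg : ∀ ξ (f : R), L ξ (-f) = -L ξ f := by
    intro ξ f
    have h := hLadd ξ f (-f)
    rw [add_neg_cancel, hL0] at h
    linear_combination -h
  -- skewness of ∇ω in the last two slots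
  have Tskew : ∀ a b c, covD D a c b = -covD D a b c := by
    intro a b c
    show L a (ω c b) - ω (D a c) b - ω c (D a b) =
      -(L a (ω b c) - ω (D a b) c - ω b (D a c))
    rw [hskew c b, hLneg, hskew (D a c) b, hskew c (D a b)]
    ring
  -- algebra constants
  set c3 : R := algebraMap ℝ R (3:ℝ)⁻¹ with hc3
  set c6 : R := algebraMap ℝ R (6:ℝ)⁻¹ with hc6
  have h6 : (6:R) * c6 = 1 := by
    rw [hc6, ← map_ofNat (algebraMap ℝ R) 6, ← map_mul]
    norm_num
  have h36 : c3 = 2 * c6 := by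
    rw [hc3, hc6, ← map_ofNat (algebraMap ℝ R) 2, ← map_mul]
    norm_num
  -- un-smul the closedness hypothesis
  have halt0 : covD D a b c - covD D a c b - covD D b a c + covD D b c a +
      covD D c a b - covD D c b a = 0 := by
    have h := halt a b c
    have h2 := congrArg (fun v => (6:ℝ) • v) h
    simpa [smul_smul, smul_zero] using h2
  rw [Tskew a b c, Tskew b a c, Tskew c a b] at halt0
  have sym2 := hsym c a b
  rw [Tskew a b c, hskew c b] at sym2
  have sym3 := hsym b c a
  rw [Tskew b a c, Tskew c a b, hskew c a, hskew b a] at sym3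
  have hx6 : 6 * covD D a b c = 4 * (φ a * ω b c) + 2 * (φ b * ω a c)
      - 2 * (φ c * ω a b) := by
    linear_combination halt0 - 2*sym3 - 4*sym2
  -- expand the goal
  have hΥ : ∀ ξ, Υ ξ = c3 * φ ξ := by
    intro ξ
    show (3:ℝ)⁻¹ • φ ξ = c3 * φ ξ
    rw [Algebra.smul_def, hc3]
  show L a (ω b c) - ω (D a b + Υ a • b + Υ b • a) c
      - ω b (D a c + Υ a • c + Υ c • a) = 0
  rw [haddl, haddl, haddr, haddr, hsmull, hsmull, hsmulr, hsmulr, hΥ, hΥ, hΥ]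
  linear_combination c6 * hx6
    - (L a (ω b c) - ω (D a b) c - ω b (D a c)) * h6
    + (φ c * ω a b - 2*(φ a * ω b c) - φ b * ω a c) * h36
    - c3 * φ c * (hskew b a)
end
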